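/- If all values a_i lie in the interval [Δ, sΔ] for some Δ > 0 and s > 1, then the ratio Var(T)/(E[T])² for the Bernoulli inverse-probability estimator T with sampling probability p = k/n is at most (1/k)·(s+1)²/(4s). -/

import Mathlib

open MeasureTheory ProbabilityTheory Finset

section Kantorovich

variable {ι : Type*} (t : Finset ι) {a : ι → ℝ} {Δ s : ℝ}

/-- Summing `(a i - Δ) * (a i - s * Δ) ≤ 0` bounds `∑ a i ^ 2` linearly in `∑ a i`; the
discriminant of the resulting quadratic in `∑ a i` gives the constant. -/
theorem four_mul_card_mul_sum_sq_le_of_mem_Icc (hs : 0 < s)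
    (ha : ∀ i ∈ t, a i ∈ Set.Icc Δ (s * Δ)) :
    4 * s * (#t * ∑ i ∈ t, a i ^ 2) ≤ (s + 1) ^ 2 * (∑ i ∈ t, a i) ^ 2 := by
  have hsq : ∑ i ∈ t, a i ^ 2 ≤ (s + 1) * Δ * ∑ i ∈ t, a i - #t * (s * Δ ^ 2) := by
    rw [mul_sum, ← nsmul_eq_mul, ← sum_const, ← sum_sub_distrib]
    refine sum_le_sum fun i hi => ?_
    obtain ⟨hΔ, hsΔ⟩ := ha i hi
    nlinarith [mul_nonneg (sub_nonneg.2 hΔ) (sub_nonneg.2 hsΔ)]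
  have hcard : (0 : ℝ) ≤ #t := Nat.cast_nonneg _
  nlinarith [mul_le_mul_of_nonneg_left hsq (by positivity : 0 ≤ 4 * s * #t),
    sq_nonneg ((s + 1) * ∑ i ∈ t, a i - 2 * s * #t * Δ)]

theorem card_mul_sum_sq_div_sq_sum_le_of_mem_Icc (hs : 0 < s)
    (ha : ∀ i ∈ t, a i ∈ Set.Icc Δ (s * Δ)) :
    #t * (∑ i ∈ t, a i ^ 2) / (∑ i ∈ t, a i) ^ 2 ≤ (s + 1) ^ 2 / (4 * s) := by
  rcases eq_or_ne (∑ i ∈ t, a i) 0 with hA | hA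
  · rw [hA, zero_pow two_ne_zero, div_zero]
    positivity
  rw [div_le_div_iff₀ (by positivity) (by positivity)]
  linarith [four_mul_card_mul_sum_sq_le_of_mem_Icc t hs ha]

end Kantorovich

section Variance

variable {Ω : Type*} [MeasurableSpace Ω] {μ : Measure Ω}

theorem integral_eq_measureReal_of_eq_zero_or_eq_one {X : Ω → ℝ} (hX : Measurable X)
    (h01 : ∀ ω, X ω = 0 ∨ X ω = 1) : μ[X] = μ.real {ω | X ω = 1} := by
  have hX_eq : X = Set.indicator {ω | X ω = 1} 1 := by
    funext ω
    rcases h01 ω with h | h <;> simp [h]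
  rw [hX_eq, integral_indicator_one (measurableSet_eq_fun hX measurable_const)]
  simp [← hX_eq]

theorem variance_le_integral_of_ae_mem_Icc_zero_one [IsProbabilityMeasure μ] {X : Ω → ℝ}
    (h : ∀ᵐ ω ∂μ, X ω ∈ Set.Icc 0 1) (hX : AEMeasurable X μ) : variance X μ ≤ μ[X] := by
  nlinarith [variance_le_sub_mul_sub h hX, sq_nonneg μ[X]]

theorem iIndepFun.variance_sum_mul_const {ι : Type*} {X : ι → Ω → ℝ} (t : Finset ι)
    (a : ι → ℝ) (hX : ∀ i, MemLp (X i) 2 μ) (hind : iIndepFun X μ) :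
    variance (fun ω => ∑ i ∈ t, X i ω * a i) μ = ∑ i ∈ t, variance (X i) μ * a i ^ 2 := by
  rw [← sum_fn, IndepFun.variance_sum (fun i _ => (hX i).mul_const (a i))]
  · exact sum_congr rfl fun i _ => variance_mul_const (a i) (X i) μ
  · intro i _ j _ hij
    exact (hind.indepFun hij).comp (measurable_mul_const (a i)) (measurable_mul_const (a j))

end Variance

theorem bernoulli_estimator_relative_variance_general
    {Ω : Type*} [MeasurableSpace Ω] (μ : Measure Ω) [IsProbabilityMeasure μ]
    (n : ℕ) (a : Fin n → ℝ)
    (Δ s : ℝ) (hs : 1 < s)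
    (hrange : ∀ i, a i ∈ Set.Icc Δ (s * Δ))
    (k : ℝ) (hk0 : 0 < k)
    (X : Fin n → Ω → ℝ) (hmeas : ∀ i, Measurable (X i))
    (hind : iIndepFun X μ)
    (h01 : ∀ i, ∀ ω, X i ω = 0 ∨ X i ω = 1)
    (hbern : ∀ i, μ {ω | X i ω = 1} = ENNReal.ofReal (k / n)) :
    variance (fun ω => (n / k) * ∑ i, X i ω * a i) μ / (∑ i, a i) ^ 2
      ≤ (1 / k) * (s + 1) ^ 2 / (4 * s) := by
  have hX01 : ∀ i, ∀ᵐ ω ∂μ, X i ω ∈ Set.Icc 0 1 := fun i =>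
    ae_of_all _ fun ω => by rcases h01 i ω with h | h <;> simp [h]
  have hmean : ∀ i, μ[X i] = k / n := fun i => by
    rw [integral_eq_measureReal_of_eq_zero_or_eq_one (hmeas i) (h01 i), measureReal_def, hbern i,
      ENNReal.toReal_ofReal (by positivity)]
  have hvar : variance (fun ω => (n / k) * ∑ i, X i ω * a i) μ ≤ n / k * ∑ i, a i ^ 2 :=
    calc variance (fun ω => (n / k) * ∑ i, X i ω * a i) μ
        = (n / k) ^ 2 * ∑ i, variance (X i) μ * a i ^ 2 := by
          rw [variance_const_mul, iIndepFun.variance_sum_mul_const _ _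
            (fun i => memLp_of_bounded (hX01 i) (hmeas i).aestronglyMeasurable 2) hind]
      _ ≤ (n / k) ^ 2 * ∑ i, k / n * a i ^ 2 := by
          gcongr with i
          exact (hmean i) ▸ variance_le_integral_of_ae_mem_Icc_zero_one (hX01 i)
            (hmeas i).aemeasurable
      _ = n / k * ∑ i, a i ^ 2 := by
          rw [← mul_sum]
          rcases eq_or_ne (n : ℝ) 0 with hn | hn
          · simp [hn]
          · field_simp
  have hratio := card_mul_sum_sq_div_sq_sum_le_of_mem_Icc univ (by linarith : 0 < s)
    fun i _ => hrange i
  rw [card_univ, Fintype.card_fin] at hratio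
  calc variance (fun ω => (n / k) * ∑ i, X i ω * a i) μ / (∑ i, a i) ^ 2
      ≤ n / k * (∑ i, a i ^ 2) / (∑ i, a i) ^ 2 := by gcongr
    _ = 1 / k * (n * (∑ i, a i ^ 2) / (∑ i, a i) ^ 2) := by ring
    _ ≤ 1 / k * ((s + 1) ^ 2 / (4 * s)) := by gcongr
    _ = 1 / k * (s + 1) ^ 2 / (4 * s) := by ring

/-- If all values lie in `[Δ, sΔ]` and the sampling probability is `p = k/n`, the squared
coefficient of error of the Bernoulli inverse-probability estimator is at most
`(1/k) * (s+1)^2 / (4s)`. -/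
theorem bernoulli_estimator_relative_variance
    {Ω : Type*} [MeasurableSpace Ω] (μ : Measure Ω) [IsProbabilityMeasure μ]
    (n : ℕ) (hn : 0 < n) (a : Fin n → ℝ)
    (Δ s : ℝ) (hΔ : 0 < Δ) (hs : 1 < s)
    (hrange : ∀ i, a i ∈ Set.Icc Δ (s * Δ))
    (k : ℝ) (hk0 : 0 < k) (hkn : k ≤ n)
    (X : Fin n → Ω → ℝ) (hmeas : ∀ i, Measurable (X i))
    (hind : iIndepFun X μ)
    (h01 : ∀ i, ∀ ω, X i ω = 0 ∨ X i ω = 1)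
    (hbern : ∀ i, μ {ω | X i ω = 1} = ENNReal.ofReal (k / n)) :
    variance (fun ω => (n / k) * ∑ i, X i ω * a i) μ / (∑ i, a i) ^ 2
      ≤ (1 / k) * (s + 1) ^ 2 / (4 * s) :=
  bernoulli_estimator_relative_variance_general μ n a Δ s hs hrange k hk0 X hmeas hind h01 hbern
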